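/- Let p ≥ 1, n = 2p + 1, and let S_p be an independent dominating set of Q_p. The set S_n = { parity(A) · A · (s ⊕ A) : A ∈ {0,1}^p, s ∈ S_p } is an independent dominating set of Q_n with |S_n| = 2^p · |S_p|. Consequently α_{2p+1} ≤ 2^p · α_p. -/

import Mathlib

/-- The n-dimensional hypercube graph on binary n-tuples, adjacency = Hamming distance 1. -/
def Q (n : ℕ) : SimpleGraph (Fin n → Bool) where
  Adj u v := hammingDist u v = 1
  symm := ⟨fun (u v : Fin n → Bool) (h : hammingDist u v = 1) => show hammingDist v u = 1 by rwa [hammingDist_comm]⟩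
  loopless := ⟨fun u (h : hammingDist u u = 1) => by simp at h⟩

instance (n : ℕ) : DecidableRel (Q n).Adj := fun a b =>
  inferInstanceAs (Decidable (hammingDist a b = 1))

/-- S is an independent set of Q n. -/
def IsIndep {n : ℕ} (S : Set (Fin n → Bool)) : Prop :=
  ∀ u ∈ S, ∀ v ∈ S, ¬ (Q n).Adj u v

/-- S is a dominating set of Q n. -/
def IsDom {n : ℕ} (S : Set (Fin n → Bool)) : Prop :=
  ∀ v, v ∉ S → ∃ u ∈ S, (Q n).Adj u v

/-- The independent domination number of Q n. -/
noncomputable def alpha (n : ℕ) : ℕ :=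
  sInf {m | ∃ S : Finset (Fin n → Bool),
    IsIndep (S : Set (Fin n → Bool)) ∧ IsDom (S : Set (Fin n → Bool)) ∧ S.card = m}

/-- The parity (mod-2 sum of bits) of a binary p-tuple. -/
def parity {p : ℕ} (A : Fin p → Bool) : Bool :=
  decide (Odd (Finset.univ.filter (fun i => A i = true)).card)

/-- The vertex parity(A) · A · (s ⊕ A) of Q_{2p+1} (written as Q_{1+(p+p)}). -/
def doubleVec {p : ℕ} (A s : Fin p → Bool) : Fin (1 + (p + p)) → Bool :=
  Fin.append (fun _ : Fin 1 => parity A) (Fin.append A (fun i => xor (s i) (A i)))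

/-- The set { parity(A) · A · (s ⊕ A) : A ∈ {0,1}^p, s ∈ S }. -/
def doubleSet {p : ℕ} (S : Finset (Fin p → Bool)) :
    Finset (Fin (1 + (p + p)) → Bool) :=
  (Finset.univ ×ˢ S).image (fun x => doubleVec x.1 x.2)

lemma Q_adj {n : ℕ} {u v : Fin n → Bool} : (Q n).Adj u v ↔ hammingDist u v = 1 :=
  Iff.rfl

lemma hd_sum {n : ℕ} (x y : Fin n → Bool) :
    hammingDist x y = ∑ i, if x i ≠ y i then 1 else 0 := by
  rw [hammingDist, Finset.card_filter]

lemma hd_append {m n : ℕ} (a c : Fin m → Bool) (b d : Fin n → Bool) :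
    hammingDist (Fin.append a b) (Fin.append c d) = hammingDist a c + hammingDist b d := by
  simp only [hd_sum]
  rw [Fin.sum_univ_add]
  simp [Fin.append_left, Fin.append_right]

lemma hd_one (a b : Fin 1 → Bool) :
    hammingDist a b = if a 0 = b 0 then 0 else 1 := by
  rw [hd_sum, Fin.sum_univ_one]
  by_cases h : a 0 = b 0 <;> simp [h]

lemma hd_xor {n : ℕ} (x y z : Fin n → Bool) :
    hammingDist (fun i => xor (x i) (z i)) (fun i => xor (y i) (z i)) = hammingDist x y := by
  simp only [hd_sum]
  apply Finset.sum_congr rfl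
  intro i _
  cases hx : x i <;> cases hy : y i <;> cases hz : z i <;> simp [hx, hy, hz]

lemma hd_update {n : ℕ} (x : Fin n → Bool) (j : Fin n) :
    hammingDist x (Function.update x j (!x j)) = 1 := by
  rw [hd_sum, Finset.sum_eq_single j]
  · simp
  · intro i _ hij
    simp [Function.update_of_ne hij]
  · simp

lemma parity_ne {p : ℕ} {A A' : Fin p → Bool} (h : hammingDist A A' = 1) :
    parity A ≠ parity A' := by
  have key : ((Finset.univ.filter (fun i => A i = true)).card
      + (Finset.univ.filter (fun i => A' i = true)).card) % 2 = hammingDist A A' % 2 := by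
    rw [hd_sum, Finset.card_filter, Finset.card_filter, ← Finset.sum_add_distrib,
      Finset.sum_nat_mod, Finset.sum_nat_mod (f := fun i => if A i ≠ A' i then 1 else 0)]
    congr 1
    apply Finset.sum_congr rfl
    intro i _
    cases hA : A i <;> cases hA' : A' i <;> simp [hA, hA']
  intro he
  simp only [parity, decide_eq_decide] at he
  rw [h] at key
  rw [Nat.odd_iff, Nat.odd_iff] at he
  omega

lemma decomp3 {p : ℕ} (v : Fin (1 + (p + p)) → Bool) :
    v = Fin.append (fun _ : Fin 1 => v (Fin.castAdd (p + p) 0))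
        (Fin.append (fun i => v (Fin.natAdd 1 (Fin.castAdd p i)))
          (fun i => v (Fin.natAdd 1 (Fin.natAdd p i)))) := by
  funext i
  induction i using Fin.addCases with
  | left j =>
    have hj : j = (0 : Fin 1) := Subsingleton.elim _ _
    rw [Fin.append_left, hj]
  | right j =>
    rw [Fin.append_right]
    induction j using Fin.addCases with
    | left k => rw [Fin.append_left]
    | right k => rw [Fin.append_right]

lemma mem_doubleSet {p : ℕ} {S : Finset (Fin p → Bool)} {v : Fin (1 + (p + p)) → Bool} :
    v ∈ doubleSet S ↔ ∃ A s, s ∈ S ∧ v = doubleVec A s := by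
  simp only [doubleSet, Finset.mem_image, Finset.mem_product, Finset.mem_univ, true_and,
    Prod.exists]
  constructor
  · rintro ⟨A, s, hs, rfl⟩; exact ⟨A, s, hs, rfl⟩
  · rintro ⟨A, s, hs, rfl⟩; exact ⟨A, s, hs, rfl⟩

lemma doubleVec_inj {p : ℕ} {A s A' s' : Fin p → Bool}
    (h : doubleVec A s = doubleVec A' s') : A = A' ∧ s = s' := by
  have hA : A = A' := by
    funext i
    have := congrFun h (Fin.natAdd 1 (Fin.castAdd p i))
    simpa [doubleVec, Fin.append_right, Fin.append_left] using this
  subst hA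
  refine ⟨rfl, ?_⟩
  funext i
  have := congrFun h (Fin.natAdd 1 (Fin.natAdd p i))
  simp only [doubleVec, Fin.append_right] at this
  revert this
  cases hA : A i <;> cases hs : s i <;> cases hs' : s' i <;> simp

lemma hd_doubleVec {p : ℕ} (A t : Fin p → Bool) (v : Fin (1 + (p + p)) → Bool) :
    hammingDist (doubleVec A t) v =
      (if parity A = v (Fin.castAdd (p + p) 0) then 0 else 1)
      + hammingDist A (fun i => v (Fin.natAdd 1 (Fin.castAdd p i)))
      + hammingDist (fun i => xor (t i) (A i)) (fun i => v (Fin.natAdd 1 (Fin.natAdd p i))) := by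
  conv_lhs => rw [decomp3 v, doubleVec, hd_append, hd_append]
  rw [hd_one]
  ring

lemma hd_dd {p : ℕ} (A s A' s' : Fin p → Bool) :
    hammingDist (doubleVec A s) (doubleVec A' s') =
      (if parity A = parity A' then 0 else 1) + hammingDist A A'
      + hammingDist (fun i => xor (s i) (A i)) (fun i => xor (s' i) (A' i)) := by
  simp only [doubleVec, hd_append, hd_one]
  ring

lemma hd_dv {p : ℕ} (A t : Fin p → Bool) (b0 : Bool) (B C : Fin p → Bool) :
    hammingDist (doubleVec A t) (Fin.append (fun _ : Fin 1 => b0) (Fin.append B C)) =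
      (if parity A = b0 then 0 else 1) + hammingDist A B
      + hammingDist (fun i => xor (t i) (A i)) C := by
  simp only [doubleVec, hd_append, hd_one]
  ring

lemma exists_indep_dom (n : ℕ) :
    ∃ S : Finset (Fin n → Bool), IsIndep (S : Set (Fin n → Bool)) ∧
      IsDom (S : Set (Fin n → Bool)) := by
  obtain ⟨S, hS, hmax⟩ := Set.Finite.exists_maximalFor Finset.card
    {S : Finset (Fin n → Bool) | IsIndep (S : Set (Fin n → Bool))} (Set.toFinite _)
    ⟨∅, by intro u hu; simp at hu⟩
  refine ⟨S, hS, ?_⟩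
  intro v hv
  by_contra hc
  push_neg at hc
  have hvS : v ∉ S := hv
  have hind : IsIndep ((insert v S : Finset _) : Set (Fin n → Bool)) := by
    intro a ha b hb
    simp only [Finset.coe_insert, Set.mem_insert_iff, Finset.mem_coe] at ha hb
    rcases ha with ha | ha <;> rcases hb with hb | hb
    · subst ha; subst hb; exact (Q n).loopless.irrefl _
    · subst ha
      intro h
      exact hc b hb ((Q n).symm.symm _ _ h)
    · subst hb
      exact hc a ha
    · exact hS a ha b hb
  have hle : S.card ≤ (insert v S).card := Finset.card_le_card (Finset.subset_insert _ _)
  have := hmax hind hle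
  rw [Finset.card_insert_of_notMem hvS] at this
  omega

/-- For p ≥ 1 and S_p an independent dominating set of Q_p, the set
    { parity(A) · A · (s ⊕ A) } is an independent dominating set of Q_{2p+1}
    of size 2^p·|S_p|; consequently α_{2p+1} ≤ 2^p · α_p. -/
theorem doubleSet_indep_dom {p : ℕ} (hp : 1 ≤ p) :
    (∀ S : Finset (Fin p → Bool),
      IsIndep (S : Set (Fin p → Bool)) → IsDom (S : Set (Fin p → Bool)) →
      IsIndep ((doubleSet S : Finset (Fin (1 + (p + p)) → Bool)) :
        Set (Fin (1 + (p + p)) → Bool)) ∧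
      IsDom ((doubleSet S : Finset (Fin (1 + (p + p)) → Bool)) :
        Set (Fin (1 + (p + p)) → Bool)) ∧
      (doubleSet S).card = 2 ^ p * S.card) ∧
    alpha (2 * p + 1) ≤ 2 ^ p * alpha p := by
  have main : ∀ S : Finset (Fin p → Bool),
      IsIndep (S : Set (Fin p → Bool)) → IsDom (S : Set (Fin p → Bool)) →
      IsIndep ((doubleSet S : Finset (Fin (1 + (p + p)) → Bool)) :
        Set (Fin (1 + (p + p)) → Bool)) ∧
      IsDom ((doubleSet S : Finset (Fin (1 + (p + p)) → Bool)) :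
        Set (Fin (1 + (p + p)) → Bool)) ∧
      (doubleSet S).card = 2 ^ p * S.card := by
    intro S hI hD
    refine ⟨?_, ?_, ?_⟩
    · -- independence
      intro u hu w hw
      rw [Finset.mem_coe, mem_doubleSet] at hu hw
      obtain ⟨A, s, hs, rfl⟩ := hu
      obtain ⟨A', s', hs', rfl⟩ := hw
      rw [Q_adj, hd_dd]
      by_cases hAA : A = A'
      · subst hAA
        rw [if_pos rfl, hammingDist_self, hd_xor]
        intro h
        apply hI s hs s' hs'
        rw [Q_adj]
        omega
      · intro h
        have h0 : hammingDist A A' ≠ 0 := hammingDist_ne_zero.mpr hAA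
        by_cases hpar : parity A = parity A'
        · rw [if_pos hpar] at h
          have h1 : hammingDist A A' = 1 := by omega
          exact parity_ne h1 hpar
        · rw [if_neg hpar] at h
          omega
    · -- domination
      intro v hv
      rw [Finset.mem_coe, mem_doubleSet] at hv
      push_neg at hv
      obtain ⟨b0, B, C, rfl⟩ : ∃ b0 B C,
          v = Fin.append (fun _ : Fin 1 => b0) (Fin.append B C) := ⟨_, _, _, decomp3 v⟩
      obtain ⟨s, hs_eq⟩ : ∃ s : Fin p → Bool, s = fun i => xor (C i) (B i) := ⟨_, rfl⟩
      have hsB : (fun i => xor (s i) (B i)) = C := by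
        funext i
        rw [hs_eq]
        cases hC : C i <;> cases hB : B i <;> simp [hC, hB]
      by_cases hsS : s ∈ S
      · by_cases hpar : parity B = b0
        · exfalso
          apply hv B s hsS
          rw [← hammingDist_eq_zero, hammingDist_comm, hd_dv, hsB,
            hammingDist_self, hammingDist_self, if_pos hpar]
        · refine ⟨doubleVec B s, ?_, ?_⟩
          · rw [Finset.mem_coe, mem_doubleSet]
            exact ⟨B, s, hsS, rfl⟩
          · rw [Q_adj, hd_dv, hsB, hammingDist_self, hammingDist_self, if_neg hpar]
      · obtain ⟨t, htS, hts⟩ := hD s hsS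
        rw [Q_adj] at hts
        by_cases hpar : parity B = b0
        · refine ⟨doubleVec B t, ?_, ?_⟩
          · rw [Finset.mem_coe, mem_doubleSet]
            exact ⟨B, t, htS, rfl⟩
          · rw [Q_adj, hd_dv, hammingDist_self, if_pos hpar, ← hsB, hd_xor, hts]
        · rw [hammingDist] at hts
          obtain ⟨j, hj⟩ := Finset.card_eq_one.mp hts
          have htj : t j ≠ s j := by
            have hjm : j ∈ Finset.filter (fun i => t i ≠ s i) Finset.univ := by
              rw [hj]; exact Finset.mem_singleton_self j
            simpa using hjm
          have hti : ∀ i, i ≠ j → t i = s i := by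
            intro i hij
            by_contra hne
            have hm : i ∈ Finset.filter (fun i => t i ≠ s i) Finset.univ := by
              simpa using hne
            rw [hj, Finset.mem_singleton] at hm
            exact hij hm
          obtain ⟨A', hA'⟩ : ∃ A', A' = Function.update B j (!B j) := ⟨_, rfl⟩
          have hdBA' : hammingDist B A' = 1 := by rw [hA']; exact hd_update B j
          have hparA' : parity A' = b0 := by
            have h1 := parity_ne hdBA'
            cases hb : b0 <;> cases hpb : parity B <;> cases hpa : parity A' <;> simp_all
          refine ⟨doubleVec A' t, ?_, ?_⟩
          · rw [Finset.mem_coe, mem_doubleSet]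
            exact ⟨A', t, htS, rfl⟩
          · rw [Q_adj, hd_dv, if_pos hparA']
            have h2 : hammingDist A' B = 1 := by rw [hammingDist_comm]; exact hdBA'
            have h3 : (fun i => xor (t i) (A' i)) = C := by
              funext i
              by_cases hij : i = j
              · subst hij
                have hsj : s i = xor (C i) (B i) := by rw [hs_eq]
                have htj' : t i = !(s i) := by
                  cases ht : t i <;> cases hs2 : s i <;> simp_all
                rw [hA', Function.update_self, htj', hsj]
                cases hB : B i <;> cases hC : C i <;> simp [hB, hC]
              · rw [hA', Function.update_of_ne hij, hti i hij]
                exact congrFun hsB i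
            rw [h2, h3, hammingDist_self]
    · -- cardinality
      rw [doubleSet, Finset.card_image_of_injOn, Finset.card_product]
      · simp
      · intro x _ y _ hxy
        obtain ⟨h1, h2⟩ := doubleVec_inj hxy
        exact Prod.ext h1 h2
  refine ⟨main, ?_⟩
  obtain ⟨S0, hI0, hD0⟩ := exists_indep_dom p
  have hmem := Nat.sInf_mem (s := {m | ∃ S : Finset (Fin p → Bool),
      IsIndep (S : Set (Fin p → Bool)) ∧ IsDom (S : Set (Fin p → Bool)) ∧ S.card = m})
      ⟨S0.card, S0, hI0, hD0, rfl⟩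
  obtain ⟨S, hI, hD, hcard⟩ := hmem
  obtain ⟨h1, h2, h3⟩ := main S hI hD
  have h4 : alpha (1 + (p + p)) ≤ 2 ^ p * alpha p := by
    apply Nat.sInf_le
    refine ⟨doubleSet S, h1, h2, ?_⟩
    rw [h3, hcard]
    rfl
  have h5 : 2 * p + 1 = 1 + (p + p) := by omega
  rw [h5]
  exact h4
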